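/- arXiv:math/0304083 — 8 statements merged into one kernel-verified Lean document; each statement's English description precedes it below -/
import Mathlib

section
/- If a time-dependent discrete curve γ satisfies the flow equation d/dt γ_k = α_k γ_k + (β_k/u_k)(γ_{k+1} - γ_{k-1}), then the quantities g_k = det(γ_k, γ_{k+1}) evolve as d/dt g_k = g_k(α_{k+1} + α_k) + β_{k+1} - β_k. -/
noncomputable section

/-- 2×2 determinant of the matrix with rows `v`, `w`. -/
def det2 (v w : ℝ × ℝ) : ℝ := v.1 * w.2 - v.2 * w.1

/-- `g_k = det(γ_k, γ_{k+1})`. -/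
def gd (γ : ℤ → ℝ × ℝ) (k : ℤ) : ℝ := det2 (γ k) (γ (k + 1))

/-- `u_k = det(γ_{k-1}, γ_{k+1})`. -/
def ud (γ : ℤ → ℝ × ℝ) (k : ℤ) : ℝ := det2 (γ (k - 1)) (γ (k + 1))

theorem stmt3 (γ : ℝ → ℤ → ℝ × ℝ) (α β : ℤ → ℝ) (t₀ : ℝ)
    (hu : ∀ k, ud (γ t₀) k ≠ 0)
    (hflow : ∀ k, HasDerivAt (fun t => γ t k)
      (α k • γ t₀ k + (β k / ud (γ t₀) k) • (γ t₀ (k + 1) - γ t₀ (k - 1))) t₀)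
    (k : ℤ) :
    HasDerivAt (fun t => gd (γ t) k)
      (gd (γ t₀) k * (α (k + 1) + α k) + β (k + 1) - β k) t₀ := by
  have h1 := hflow k
  have h2 := hflow (k + 1)
  have hx1 := (hasFDerivAt_fst (𝕜 := ℝ)).comp_hasDerivAt t₀ h1
  have hy1 := (hasFDerivAt_snd (𝕜 := ℝ)).comp_hasDerivAt t₀ h1
  have hx2 := (hasFDerivAt_fst (𝕜 := ℝ)).comp_hasDerivAt t₀ h2
  have hy2 := (hasFDerivAt_snd (𝕜 := ℝ)).comp_hasDerivAt t₀ h2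
  have h := (hx1.mul hy2).sub (hy1.mul hx2)
  have hU1 := hu k
  have hU2 := hu (k + 1)
  simp only [ud, det2, show (k : ℤ) + 1 - 1 = k by ring] at h hU1 hU2 ⊢
  simp only [gd, det2]
  convert h using 1
  case e'_4 => rfl
  case e'_5 => rfl
  case e'_8 => rfl
  simp only [ContinuousLinearMap.coe_fst', ContinuousLinearMap.coe_snd',
    Prod.fst_add, Prod.snd_add, Prod.smul_fst, Prod.smul_snd,
    Prod.fst_sub, Prod.snd_sub, smul_eq_mul, Function.comp_apply]
  have hU1' : (γ t₀ (k + 1)).2 * (γ t₀ (k - 1)).1 - (γ t₀ (k + 1)).1 * (γ t₀ (k - 1)).2 ≠ 0 := by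
    intro h'; apply hU1; linarith
  field_simp
  ring
end
end

section
/- Under the flow γ̇_k = α_k γ_k + (β_k/u_k)(γ_{k+1} - γ_{k-1}), the quantities u_k = det(γ_{k-1}, γ_{k+1}) satisfy u̇_k = u_k(α_{k-1} + α_{k+1}) + β_{k-1} (g_k/(u_{k-1} g_{k-1}))(g_{k-2} + g_{k-1}) - β_{k+1} (g_{k-1}/(u_{k+1} g_k))(g_k + g_{k+1}) + u_k(β_{k+1}/g_k - β_{k-1}/g_{k-1}). -/
noncomputable section

private lemma hasDerivAt_fst' {f : ℝ → ℝ × ℝ} {v : ℝ × ℝ} {t : ℝ}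
    (h : HasDerivAt f v t) : HasDerivAt (fun s => (f s).1) v.1 t := by
  have := ((ContinuousLinearMap.fst ℝ ℝ ℝ).hasFDerivAt.comp t h.hasFDerivAt).hasDerivAt
  simp at this
  exact this

private lemma hasDerivAt_snd' {f : ℝ → ℝ × ℝ} {v : ℝ × ℝ} {t : ℝ}
    (h : HasDerivAt f v t) : HasDerivAt (fun s => (f s).2) v.2 t := by
  have := ((ContinuousLinearMap.snd ℝ ℝ ℝ).hasFDerivAt.comp t h.hasFDerivAt).hasDerivAt
  simp at this
  exact this

theorem stmt4 (γ : ℝ → ℤ → ℝ × ℝ) (α β : ℤ → ℝ) (t₀ : ℝ)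
    (hg : ∀ k, gd (γ t₀) k ≠ 0) (hu : ∀ k, ud (γ t₀) k ≠ 0)
    (hrec : ∀ k, γ t₀ (k + 1) =
      (gd (γ t₀) (k - 1))⁻¹ • (ud (γ t₀) k • γ t₀ k - gd (γ t₀) k • γ t₀ (k - 1)))
    (hflow : ∀ k, HasDerivAt (fun t => γ t k)
      (α k • γ t₀ k + (β k / ud (γ t₀) k) • (γ t₀ (k + 1) - γ t₀ (k - 1))) t₀)
    (k : ℤ) :
    HasDerivAt (fun t => ud (γ t) k)
      (ud (γ t₀) k * (α (k - 1) + α (k + 1))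
        + β (k - 1) * (gd (γ t₀) k / (ud (γ t₀) (k - 1) * gd (γ t₀) (k - 1)))
            * (gd (γ t₀) (k - 2) + gd (γ t₀) (k - 1))
        - β (k + 1) * (gd (γ t₀) (k - 1) / (ud (γ t₀) (k + 1) * gd (γ t₀) k))
            * (gd (γ t₀) k + gd (γ t₀) (k + 1))
        + ud (γ t₀) k * (β (k + 1) / gd (γ t₀) k - β (k - 1) / gd (γ t₀) (k - 1))) t₀ := by
  set A := γ t₀ (k - 2) with hA
  set B := γ t₀ (k - 1) with hB
  set C := γ t₀ k with hC
  set Dv := γ t₀ (k + 1) with hD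
  set E := γ t₀ (k + 2) with hE
  have hgm2 : gd (γ t₀) (k - 2) = det2 A B := by
    rw [gd, show k - 2 + 1 = k - 1 by ring]
  have hgm1 : gd (γ t₀) (k - 1) = det2 B C := by
    rw [gd, show k - 1 + 1 = k by ring]
  have hg0 : gd (γ t₀) k = det2 C Dv := rfl
  have hg1 : gd (γ t₀) (k + 1) = det2 Dv E := by
    rw [gd, show k + 1 + 1 = k + 2 by ring]
  have hum1 : ud (γ t₀) (k - 1) = det2 A C := by
    rw [ud, show k - 1 - 1 = k - 2 by ring, show k - 1 + 1 = k by ring]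
  have hu0 : ud (γ t₀) k = det2 B Dv := rfl
  have hu1 : ud (γ t₀) (k + 1) = det2 C E := by
    rw [ud, show k + 1 - 1 = k by ring, show k + 1 + 1 = k + 2 by ring]
  have n1 : det2 B C ≠ 0 := by rw [← hgm1]; exact hg (k - 1)
  have n2 : det2 C Dv ≠ 0 := hg k
  have n3 : det2 A C ≠ 0 := by rw [← hum1]; exact hu (k - 1)
  have n4 : det2 C E ≠ 0 := by rw [← hu1]; exact hu (k + 1)
  -- recursions
  have hr1 : Dv = (det2 B C)⁻¹ • (det2 B Dv • C - det2 C Dv • B) := by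
    have := hrec k
    rwa [hgm1, hu0, hg0] at this
  have hr2 : E = (det2 C Dv)⁻¹ • (det2 C E • Dv - det2 Dv E • C) := by
    have := hrec (k + 1)
    rw [show k + 1 + 1 = k + 2 by ring, show k + 1 - 1 = k by ring] at this
    rwa [hg0, hu1, hg1] at this
  -- component equations with denominators cleared
  have c1 : Dv.1 * det2 B C = det2 B Dv * C.1 - det2 C Dv * B.1 := by
    have h := congrArg Prod.fst hr1
    simp only [Prod.smul_fst, Prod.fst_sub, smul_eq_mul] at h
    field_simp [n1] at h
    linarith [h]
  have c2 : Dv.2 * det2 B C = det2 B Dv * C.2 - det2 C Dv * B.2 := by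
    have h := congrArg Prod.snd hr1
    simp only [Prod.smul_snd, Prod.snd_sub, smul_eq_mul] at h
    field_simp [n1] at h
    linarith [h]
  have d1 : E.1 * det2 C Dv = det2 C E * Dv.1 - det2 Dv E * C.1 := by
    have h := congrArg Prod.fst hr2
    simp only [Prod.smul_fst, Prod.fst_sub, smul_eq_mul] at h
    field_simp [n2] at h
    linarith [h]
  have d2 : E.2 * det2 C Dv = det2 C E * Dv.2 - det2 Dv E * C.2 := by
    have h := congrArg Prod.snd hr2
    simp only [Prod.smul_snd, Prod.snd_sub, smul_eq_mul] at h
    field_simp [n2] at h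
    linarith [h]
  -- cross determinants
  have hX : det2 A Dv * det2 B C = det2 B Dv * det2 A C - det2 C Dv * det2 A B := by
    simp only [det2] at c1 c2 ⊢
    linear_combination A.1 * c2 - A.2 * c1
  have hY : det2 B E * det2 C Dv = det2 C E * det2 B Dv - det2 Dv E * det2 B C := by
    simp only [det2] at d1 d2 ⊢
    linear_combination B.1 * d2 - B.2 * d1
  -- derivative computation
  have h1 := hflow (k - 1)
  have h2 := hflow (k + 1)
  rw [show k - 1 + 1 = k by ring, show k - 1 - 1 = k - 2 by ring] at h1
  rw [show k + 1 + 1 = k + 2 by ring, show k + 1 - 1 = k by ring] at h2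
  rw [hum1] at h1
  rw [hu1] at h2
  set v1 := α (k - 1) • B + (β (k - 1) / det2 A C) • (C - A) with hv1
  set v2 := α (k + 1) • Dv + (β (k + 1) / det2 C E) • (E - C) with hv2
  have hd : HasDerivAt (fun t => ud (γ t) k)
      (v1.1 * Dv.2 + B.1 * v2.2 - (v1.2 * Dv.1 + B.2 * v2.1)) t₀ := by
    have heq : (fun t => ud (γ t) k) =
        fun t => (γ t (k - 1)).1 * (γ t (k + 1)).2 - (γ t (k - 1)).2 * (γ t (k + 1)).1 := by
      funext t; rfl
    rw [heq]
    exact (((hasDerivAt_fst' h1).mul (hasDerivAt_snd' h2)).sub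
      ((hasDerivAt_snd' h1).mul (hasDerivAt_fst' h2)))
  convert hd using 1
  rw [hgm2, hgm1, hg0, hg1, hum1, hu0, hu1]
  simp only [hv1, hv2, Prod.smul_fst, Prod.smul_snd, Prod.fst_add, Prod.snd_add,
    Prod.fst_sub, Prod.snd_sub, smul_eq_mul]
  simp only [det2] at hX hY n1 n2 n3 n4 ⊢
  field_simp [n1, n2, n3, n4, show C.2 * A.1 - C.1 * A.2 ≠ 0 by intro h; apply n3; linarith,
    show Dv.2 * C.1 - Dv.1 * C.2 ≠ 0 by intro h; apply n2; linarith]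
  linear_combination (norm := ring_nf)
    (β (k-1) * (C.1*Dv.2 - C.2*Dv.1) * (C.1*E.2 - C.2*E.1)) * hX
    + (β (k+1) * (B.1*C.2 - B.2*C.1) * (A.1*C.2 - A.2*C.1)) * hY
end
end

section
/- With the canonical bracket {x_i, y_i} = 1/2 (all other brackets of coordinates zero) on periodic coordinates (x_k, y_k), k mod N, and g_k = x_k y_{k+1} - y_k x_{k+1}, a_k = g_k^{-2}, one has {a_k, a_j} = 0 whenever j ∉ {k-1, k+1} (mod N), and {a_k, a_{k+1}} = -2 a_k a_{k+1} b_{k+1} - 2 a_k a_{k+1} λ, where b_k = u_k/(g_{k-1} g_k) - λ and u_k = x_{k-1} y_{k+1} - y_{k-1} x_{k+1}. -/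
noncomputable section

open Function

/-- The canonical Poisson bracket on `ℝ^{2N}` with coordinates
`(x_i, y_i)`, `i : ZMod N`, determined by `{x_i, y_i} = 1/2` and all other
coordinate brackets zero:
`{f, g} = (1/2) ∑ i (∂f/∂x_i ∂g/∂y_i - ∂f/∂y_i ∂g/∂x_i)`. -/
def pb (N : ℕ) [NeZero N] (f g : (ZMod N → ℝ) × (ZMod N → ℝ) → ℝ)
    (p : (ZMod N → ℝ) × (ZMod N → ℝ)) : ℝ :=
  (1 / 2) * ∑ i : ZMod N,
    (deriv (fun t => f (Function.update p.1 i t, p.2)) (p.1 i) *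
        deriv (fun t => g (p.1, Function.update p.2 i t)) (p.2 i) -
      deriv (fun t => f (p.1, Function.update p.2 i t)) (p.2 i) *
        deriv (fun t => g (Function.update p.1 i t, p.2)) (p.1 i))

/-- `g_k = x_k y_{k+1} - y_k x_{k+1}` (indices mod `N`). -/
def Gv (N : ℕ) (k : ZMod N) (p : (ZMod N → ℝ) × (ZMod N → ℝ)) : ℝ :=
  p.1 k * p.2 (k + 1) - p.2 k * p.1 (k + 1)

/-- `u_k = x_{k-1} y_{k+1} - y_{k-1} x_{k+1}` (indices mod `N`). -/
def Uv (N : ℕ) (k : ZMod N) (p : (ZMod N → ℝ) × (ZMod N → ℝ)) : ℝ :=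
  p.1 (k - 1) * p.2 (k + 1) - p.2 (k - 1) * p.1 (k + 1)

/-- Flaschka–Manakov variable `a_k = g_k^{-2}`. -/
def Av (N : ℕ) (k : ZMod N) (p : (ZMod N → ℝ) × (ZMod N → ℝ)) : ℝ :=
  (Gv N k p ^ 2)⁻¹

/-- Flaschka–Manakov variable `b_k = u_k/(g_{k-1} g_k) - λ`. -/
def Bv (N : ℕ) (lam : ℝ) (k : ZMod N) (p : (ZMod N → ℝ) × (ZMod N → ℝ)) : ℝ :=
  Uv N k p / (Gv N (k - 1) p * Gv N k p) - lam

def dgx (N : ℕ) (k i : ZMod N) (p : (ZMod N → ℝ) × (ZMod N → ℝ)) : ℝ :=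
  (if k = i then p.2 (k + 1) else 0) - (if k + 1 = i then p.2 k else 0)
def dgy (N : ℕ) (k i : ZMod N) (p : (ZMod N → ℝ) × (ZMod N → ℝ)) : ℝ :=
  (if k + 1 = i then p.1 k else 0) - (if k = i then p.1 (k + 1) else 0)

lemma deriv_aux (c d t0 : ℝ) (h : c + d * t0 ≠ 0) :
    deriv (fun t => ((c + d * t) ^ 2)⁻¹) t0 = -2 * d / (c + d * t0) ^ 3 := by
  have h1 : HasDerivAt (fun t : ℝ => c + d * t) d t0 := by
    simpa using ((hasDerivAt_id t0).const_mul d).const_add c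
  have h2 := ((h1.pow 2).inv (pow_ne_zero 2 h))
  rw [show (fun t : ℝ => ((c + d * t) ^ 2)⁻¹) = ((fun t => c + d * t) ^ 2)⁻¹ from rfl, h2.deriv, Pi.pow_apply]; field_simp; ring

lemma deriv_Av_x (N : ℕ) [NeZero N] (k i : ZMod N) (p : (ZMod N → ℝ) × (ZMod N → ℝ))
    (hk : k + 1 ≠ k) (hg : Gv N k p ≠ 0) :
    deriv (fun t => Av N k (Function.update p.1 i t, p.2)) (p.1 i)
      = -2 * dgx N k i p / Gv N k p ^ 3 := by
  set d := dgx N k i p with hd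
  set c := Gv N k p - d * p.1 i with hc
  have hfun : (fun t => Av N k (Function.update p.1 i t, p.2))
      = fun t => ((c + d * t) ^ 2)⁻¹ := by
    funext t
    simp only [Av, Gv, hc, hd, dgx, Function.update_apply]
    split_ifs with h1 h2 h3
    · exact absurd (h2.trans h1.symm) hk
    · rw [← h1]; ring
    · rw [← h3]; ring
    · ring
  have hval : c + d * p.1 i = Gv N k p := by rw [hc]; ring
  rw [hfun, deriv_aux c d _ (by rw [hval]; exact hg), hval]

lemma deriv_Av_y (N : ℕ) [NeZero N] (k i : ZMod N) (p : (ZMod N → ℝ) × (ZMod N → ℝ))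
    (hk : k + 1 ≠ k) (hg : Gv N k p ≠ 0) :
    deriv (fun t => Av N k (p.1, Function.update p.2 i t)) (p.2 i)
      = -2 * dgy N k i p / Gv N k p ^ 3 := by
  set d := dgy N k i p with hd
  set c := Gv N k p - d * p.2 i with hc
  have hfun : (fun t => Av N k (p.1, Function.update p.2 i t))
      = fun t => ((c + d * t) ^ 2)⁻¹ := by
    funext t
    simp only [Av, Gv, hc, hd, dgy, Function.update_apply]
    split_ifs with h1 h2 h3
    · exact absurd (h1.trans h2.symm) hk
    · rw [← h1]; ring
    · rw [← h3]; ring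
    · ring
  have hval : c + d * p.2 i = Gv N k p := by rw [hc]; ring
  rw [hfun, deriv_aux c d _ (by rw [hval]; exact hg), hval]

theorem stmt6 (N : ℕ) [NeZero N] (hN : 3 < N) (lam : ℝ)
    (p : (ZMod N → ℝ) × (ZMod N → ℝ)) (hg : ∀ k, Gv N k p ≠ 0) (k : ZMod N) :
    pb N (Av N k) (Av N (k + 1)) p =
      -2 * Av N k p * Av N (k + 1) p * Bv N lam (k + 1) p
        - 2 * Av N k p * Av N (k + 1) p * lam ∧
    ∀ j : ZMod N, j ≠ k - 1 → j ≠ k + 1 → pb N (Av N k) (Av N j) p = 0 := by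
  have hone : (1 : ZMod N) ≠ 0 := by
    intro h
    rw [show ((1:ZMod N)) = ((1:ℕ):ZMod N) by push_cast; ring] at h
    have := Nat.le_of_dvd (by norm_num) ((ZMod.natCast_eq_zero_iff 1 N).mp h)
    omega
  have htwo : (2 : ZMod N) ≠ 0 := by
    intro h
    rw [show ((2:ZMod N)) = ((2:ℕ):ZMod N) by push_cast; ring] at h
    have := Nat.le_of_dvd (by norm_num) ((ZMod.natCast_eq_zero_iff 2 N).mp h)
    omega
  have hstep : ∀ m : ZMod N, m + 1 ≠ m := by
    intro m h; apply hone; linear_combination h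
  have hstep2 : ∀ m : ZMod N, m + 1 + 1 ≠ m := by
    intro m h; apply htwo; linear_combination h
  have hpb : ∀ j, pb N (Av N k) (Av N j) p =
      (1/2) * ∑ i : ZMod N,
        ((-2 * dgx N k i p / Gv N k p ^ 3) * (-2 * dgy N j i p / Gv N j p ^ 3) -
         (-2 * dgy N k i p / Gv N k p ^ 3) * (-2 * dgx N j i p / Gv N j p ^ 3)) := by
    intro j
    unfold pb
    congr 1
    apply Finset.sum_congr rfl
    intro i _
    rw [deriv_Av_x N k i p (hstep k) (hg k), deriv_Av_y N j i p (hstep j) (hg j),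
        deriv_Av_y N k i p (hstep k) (hg k), deriv_Av_x N j i p (hstep j) (hg j)]
  constructor
  · rw [hpb (k+1)]
    rw [Finset.sum_eq_single_of_mem (k+1) (Finset.mem_univ _)]
    · have hne1 : ¬ (k = k + 1) := fun h => hstep k h.symm
      have hne2 : ¬ (k + 1 + 1 = k + 1) := hstep (k+1)
      have e1 : dgx N k (k+1) p = -p.2 k := by simp [dgx, hne1]
      have e2 : dgy N k (k+1) p = p.1 k := by simp [dgy, hne1]
      have e3 : dgx N (k+1) (k+1) p = p.2 (k+1+1) := by simp [dgx, hne2]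
      have e4 : dgy N (k+1) (k+1) p = -p.1 (k+1+1) := by simp [dgy, hne2]
      rw [e1, e2, e3, e4]
      have hk1 : k + 1 - 1 = k := by ring
      simp only [Av, Bv, Uv, hk1]
      have g1 := hg k
      have g2 := hg (k+1)
      field_simp
      unfold Gv
      ring
    · intro i _ hi
      simp only [dgx, dgy]
      have hii : ¬ (k + 1 = i) := fun h => hi h.symm
      rw [if_neg hii, if_neg hii]
      split_ifs <;> first | ring1 | (exfalso; subst_vars; simp_all)
  · intro j hj1 hj2
    by_cases hjk : j = k
    · subst hjk
      unfold pb
      rw [Finset.sum_eq_zero (fun i _ => by ring)]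
      simp
    · rw [hpb j]
      rw [Finset.sum_eq_zero]
      · simp
      intro i _
      have c1 : k ≠ j := fun h => hjk h.symm
      have c2 : k + 1 ≠ j := fun h => hj2 h.symm
      have c3 : k ≠ j + 1 := by
        intro h
        apply hj1
        rw [h]; ring
      have c4 : k + 1 ≠ j + 1 := fun h => c1 (add_right_cancel h)
      simp only [dgx, dgy]
      split_ifs <;> first | ring1 | (exfalso; subst_vars; simp_all)
end
end

section
/- With the canonical bracket {x_i, y_i} = 1/2 and the Flaschka–Manakov variables a_k = g_k^{-2}, b_k = u_k/(g_{k-1} g_k) - λ, one has {b_k, b_{k+1}} = -a_k(b_k + b_{k+1}) - 2 a_k λ, and {b_k, b_j} = 0 for j ∉ {k-1, k+1} (mod N). -/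
noncomputable section

open Function

lemma master (f : ℝ → ℝ) (lam u0 u1 g0 g1 h0 h1 t : ℝ)
    (hf : ∀ s, f s = (u0 + u1 * s) / ((g0 + g1 * s) * (h0 + h1 * s)) - lam)
    (hG : g0 + g1 * t ≠ 0) (hH : h0 + h1 * t ≠ 0) :
    deriv f t = (u1 * ((g0 + g1 * t) * (h0 + h1 * t)) -
      (u0 + u1 * t) * (g1 * (h0 + h1 * t) + (g0 + g1 * t) * h1)) /
      ((g0 + g1 * t) * (h0 + h1 * t)) ^ 2 := by
  have hu : HasDerivAt (fun s => u0 + u1 * s) u1 t := by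
    simpa using ((hasDerivAt_id t).const_mul u1).const_add u0
  have hG' : HasDerivAt (fun s => g0 + g1 * s) g1 t := by
    simpa using ((hasDerivAt_id t).const_mul g1).const_add g0
  have hH' : HasDerivAt (fun s => h0 + h1 * s) h1 t := by
    simpa using ((hasDerivAt_id t).const_mul h1).const_add h0
  have h := (hu.div (hG'.mul hH') (mul_ne_zero hG hH)).sub_const lam
  rw [funext hf]
  simpa using h.deriv

lemma dBx_zero (N : ℕ) [NeZero N] (lam : ℝ) (p : (ZMod N → ℝ) × (ZMod N → ℝ))
    {m i : ZMod N} (h1 : m - 1 ≠ i) (h2 : m ≠ i) (h3 : m + 1 ≠ i) (t0 : ℝ) :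
    deriv (fun t => Bv N lam m (Function.update p.1 i t, p.2)) t0 = 0 := by
  have : (fun t => Bv N lam m (Function.update p.1 i t, p.2)) =
      fun _ => Bv N lam m p := by
    funext t
    simp [Bv, Uv, Gv, Function.update_apply, sub_add_cancel, h1, h2, h3]
  rw [this]
  exact deriv_const _ _

lemma dBy_zero (N : ℕ) [NeZero N] (lam : ℝ) (p : (ZMod N → ℝ) × (ZMod N → ℝ))
    {m i : ZMod N} (h1 : m - 1 ≠ i) (h2 : m ≠ i) (h3 : m + 1 ≠ i) (t0 : ℝ) :
    deriv (fun t => Bv N lam m (p.1, Function.update p.2 i t)) t0 = 0 := by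
  have : (fun t => Bv N lam m (p.1, Function.update p.2 i t)) =
      fun _ => Bv N lam m p := by
    funext t
    simp [Bv, Uv, Gv, Function.update_apply, sub_add_cancel, h1, h2, h3]
  rw [this]
  exact deriv_const _ _

set_option maxHeartbeats 4000000 in
theorem stmt7 (N : ℕ) [NeZero N] (hN : 3 < N) (lam : ℝ)
    (p : (ZMod N → ℝ) × (ZMod N → ℝ)) (hg : ∀ k, Gv N k p ≠ 0) (k : ZMod N) :
    pb N (Bv N lam k) (Bv N lam (k + 1)) p =
      -(Av N k p) * (Bv N lam k p + Bv N lam (k + 1) p) - 2 * Av N k p * lam ∧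
    ∀ j : ZMod N, j ≠ k - 1 → j ≠ k + 1 → pb N (Bv N lam k) (Bv N lam j) p = 0 := by
  have key : ∀ (a b : ZMod N) (c : ℕ), 0 < c → c < 4 → b = a + (c : ZMod N) → a ≠ b := by
    intro a b c hc1 hc2 hb h
    have h0 : ((c : ℕ) : ZMod N) = 0 := by rw [hb] at h; linear_combination -h
    rw [ZMod.natCast_eq_zero_iff] at h0
    have h1 := Nat.le_of_dvd hc1 h0
    omega
  have M1 : k - 1 ≠ k := key _ _ 1 one_pos (by norm_num) (by push_cast; ring)
  have M2 : k ≠ k + 1 := key _ _ 1 one_pos (by norm_num) (by push_cast; ring)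
  have M3 : k - 1 ≠ k + 1 := key _ _ 2 two_pos (by norm_num) (by push_cast; ring)
  have M4 : k ≠ k + 2 := key _ _ 2 two_pos (by norm_num) (by push_cast; ring)
  have M5 : k + 1 ≠ k + 2 := key _ _ 1 one_pos (by norm_num) (by push_cast; ring)
  have M6 : k + 1 ≠ k + 3 := key _ _ 2 two_pos (by norm_num) (by push_cast; ring)
  have M7 : k - 1 ≠ k + 2 := key _ _ 3 three_pos (by norm_num) (by push_cast; ring)
  have M8 : k - 3 ≠ k - 1 := key _ _ 2 two_pos (by norm_num) (by push_cast; ring)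
  have M9 : k - 2 ≠ k - 1 := key _ _ 1 one_pos (by norm_num) (by push_cast; ring)
  have i1 : k - 1 + 1 = k := by ring
  have i2 : k + 1 + 1 = k + 2 := by ring
  have i3 : k + 2 + 1 = k + 3 := by ring
  have i4 : k - 2 + 1 = k - 1 := by ring
  have i5 : k - 2 - 1 = k - 3 := by ring
  have i6 : k + 1 - 1 = k := by ring
  have i7 : k + 2 - 1 = k + 1 := by ring
  have i8 : k - 3 + 1 = k - 2 := by ring
  have hA : p.1 (k - 1) * p.2 k - p.2 (k - 1) * p.1 k ≠ 0 := by
    have := hg (k - 1); simpa only [Gv, i1] using this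
  have hB : p.1 k * p.2 (k + 1) - p.2 k * p.1 (k + 1) ≠ 0 := by
    have := hg k; simpa only [Gv] using this
  have hC : p.1 (k + 1) * p.2 (k + 2) - p.2 (k + 1) * p.1 (k + 2) ≠ 0 := by
    have := hg (k + 1); simpa only [Gv, i2] using this
  have hD : p.1 (k + 2) * p.2 (k + 3) - p.2 (k + 2) * p.1 (k + 3) ≠ 0 := by
    have := hg (k + 2); simpa only [Gv, i3] using this
  have hE : p.1 (k - 3) * p.2 (k - 2) - p.2 (k - 3) * p.1 (k - 2) ≠ 0 := by
    have := hg (k - 3); simpa only [Gv, show k - 3 + 1 = k - 2 from by ring] using this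
  have hF : p.1 (k - 2) * p.2 (k - 1) - p.2 (k - 2) * p.1 (k - 1) ≠ 0 := by
    have := hg (k - 2); simpa only [Gv, i4] using this
  have D1 : deriv (fun t => Bv N lam k (Function.update p.1 (k) t, p.2)) (p.1 (k)) =
      -(Uv N k p) * (Gv N (k - 1) p * p.2 (k + 1) - p.2 (k - 1) * Gv N k p) / (Gv N (k - 1) p * Gv N k p) ^ 2 := by
    have hf : ∀ s : ℝ, (fun t => Bv N lam k (Function.update p.1 (k) t, p.2)) s =
        ((Uv N k p) + (0) * s) / (((p.1 (k - 1) * p.2 k) + (-(p.2 (k - 1))) * s) * ((-(p.2 k * p.1 (k + 1))) + (p.2 (k + 1)) * s)) - lam := by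
      intro s
      simp only [Bv, Uv, Gv, Function.update_apply, i1, i2, i3, i4, i5, i6, i7, i8, M1, M1.symm, M2, M2.symm, M3, M3.symm, M4, M4.symm, M5, M5.symm, M6, M6.symm, M7, M7.symm, M8, M8.symm, M9, M9.symm,
        if_true, if_false, ite_true, ite_false, eq_self_iff_true]
      ring
    rw [master _ lam (Uv N k p) (0) (p.1 (k - 1) * p.2 k) (-(p.2 (k - 1))) (-(p.2 k * p.1 (k + 1))) (p.2 (k + 1)) (p.1 (k)) hf
      (by intro h; apply hg (k - 1); simp only [Gv, i1, i2, i3, i4, i5, i6, i7, i8]; linear_combination h) (by intro h; apply hg (k); simp only [Gv, i1, i2, i3, i4, i5, i6, i7, i8]; linear_combination h)]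
    simp only [Gv, Uv, i1, i2, i3, i4, i5, i6, i7, i8]
    ring
  have D2 : deriv (fun t => Bv N lam k (p.1, Function.update p.2 (k) t)) (p.2 (k)) =
      -(Uv N k p) * (p.1 (k - 1) * Gv N k p - Gv N (k - 1) p * p.1 (k + 1)) / (Gv N (k - 1) p * Gv N k p) ^ 2 := by
    have hf : ∀ s : ℝ, (fun t => Bv N lam k (p.1, Function.update p.2 (k) t)) s =
        ((Uv N k p) + (0) * s) / (((-(p.2 (k - 1) * p.1 k)) + (p.1 (k - 1)) * s) * ((p.1 k * p.2 (k + 1)) + (-(p.1 (k + 1))) * s)) - lam := by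
      intro s
      simp only [Bv, Uv, Gv, Function.update_apply, i1, i2, i3, i4, i5, i6, i7, i8, M1, M1.symm, M2, M2.symm, M3, M3.symm, M4, M4.symm, M5, M5.symm, M6, M6.symm, M7, M7.symm, M8, M8.symm, M9, M9.symm,
        if_true, if_false, ite_true, ite_false, eq_self_iff_true]
      ring
    rw [master _ lam (Uv N k p) (0) (-(p.2 (k - 1) * p.1 k)) (p.1 (k - 1)) (p.1 k * p.2 (k + 1)) (-(p.1 (k + 1))) (p.2 (k)) hf
      (by intro h; apply hg (k - 1); simp only [Gv, i1, i2, i3, i4, i5, i6, i7, i8]; linear_combination h) (by intro h; apply hg (k); simp only [Gv, i1, i2, i3, i4, i5, i6, i7, i8]; linear_combination h)]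
    simp only [Gv, Uv, i1, i2, i3, i4, i5, i6, i7, i8]
    ring
  have D3 : deriv (fun t => Bv N lam k (Function.update p.1 (k + 1) t, p.2)) (p.1 (k + 1)) =
      Gv N (k - 1) p * (Uv N k p * p.2 k - p.2 (k - 1) * Gv N k p) / (Gv N (k - 1) p * Gv N k p) ^ 2 := by
    have hf : ∀ s : ℝ, (fun t => Bv N lam k (Function.update p.1 (k + 1) t, p.2)) s =
        ((p.1 (k - 1) * p.2 (k + 1)) + (-(p.2 (k - 1))) * s) / (((Gv N (k - 1) p) + (0) * s) * ((p.1 k * p.2 (k + 1)) + (-(p.2 k)) * s)) - lam := by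
      intro s
      simp only [Bv, Uv, Gv, Function.update_apply, i1, i2, i3, i4, i5, i6, i7, i8, M1, M1.symm, M2, M2.symm, M3, M3.symm, M4, M4.symm, M5, M5.symm, M6, M6.symm, M7, M7.symm, M8, M8.symm, M9, M9.symm,
        if_true, if_false, ite_true, ite_false, eq_self_iff_true]
      ring
    rw [master _ lam (p.1 (k - 1) * p.2 (k + 1)) (-(p.2 (k - 1))) (Gv N (k - 1) p) (0) (p.1 k * p.2 (k + 1)) (-(p.2 k)) (p.1 (k + 1)) hf
      (by simpa using hg (k - 1)) (by intro h; apply hg (k); simp only [Gv, i1, i2, i3, i4, i5, i6, i7, i8]; linear_combination h)]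
    simp only [Gv, Uv, i1, i2, i3, i4, i5, i6, i7, i8]
    ring
  have D4 : deriv (fun t => Bv N lam k (p.1, Function.update p.2 (k + 1) t)) (p.2 (k + 1)) =
      Gv N (k - 1) p * (p.1 (k - 1) * Gv N k p - Uv N k p * p.1 k) / (Gv N (k - 1) p * Gv N k p) ^ 2 := by
    have hf : ∀ s : ℝ, (fun t => Bv N lam k (p.1, Function.update p.2 (k + 1) t)) s =
        ((-(p.2 (k - 1) * p.1 (k + 1))) + (p.1 (k - 1)) * s) / (((Gv N (k - 1) p) + (0) * s) * ((-(p.2 k * p.1 (k + 1))) + (p.1 k) * s)) - lam := by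
      intro s
      simp only [Bv, Uv, Gv, Function.update_apply, i1, i2, i3, i4, i5, i6, i7, i8, M1, M1.symm, M2, M2.symm, M3, M3.symm, M4, M4.symm, M5, M5.symm, M6, M6.symm, M7, M7.symm, M8, M8.symm, M9, M9.symm,
        if_true, if_false, ite_true, ite_false, eq_self_iff_true]
      ring
    rw [master _ lam (-(p.2 (k - 1) * p.1 (k + 1))) (p.1 (k - 1)) (Gv N (k - 1) p) (0) (-(p.2 k * p.1 (k + 1))) (p.1 k) (p.2 (k + 1)) hf
      (by simpa using hg (k - 1)) (by intro h; apply hg (k); simp only [Gv, i1, i2, i3, i4, i5, i6, i7, i8]; linear_combination h)]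
    simp only [Gv, Uv, i1, i2, i3, i4, i5, i6, i7, i8]
    ring
  have D5 : deriv (fun t => Bv N lam (k + 1) (Function.update p.1 (k) t, p.2)) (p.1 (k)) =
      Gv N (k + 1) p * (p.2 (k + 2) * Gv N k p - Uv N (k + 1) p * p.2 (k + 1)) / (Gv N k p * Gv N (k + 1) p) ^ 2 := by
    have hf : ∀ s : ℝ, (fun t => Bv N lam (k + 1) (Function.update p.1 (k) t, p.2)) s =
        ((-(p.2 k * p.1 (k + 2))) + (p.2 (k + 2)) * s) / (((-(p.2 k * p.1 (k + 1))) + (p.2 (k + 1)) * s) * ((Gv N (k + 1) p) + (0) * s)) - lam := by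
      intro s
      simp only [Bv, Uv, Gv, Function.update_apply, i1, i2, i3, i4, i5, i6, i7, i8, M1, M1.symm, M2, M2.symm, M3, M3.symm, M4, M4.symm, M5, M5.symm, M6, M6.symm, M7, M7.symm, M8, M8.symm, M9, M9.symm,
        if_true, if_false, ite_true, ite_false, eq_self_iff_true]
      ring
    rw [master _ lam (-(p.2 k * p.1 (k + 2))) (p.2 (k + 2)) (-(p.2 k * p.1 (k + 1))) (p.2 (k + 1)) (Gv N (k + 1) p) (0) (p.1 (k)) hf
      (by intro h; apply hg (k); simp only [Gv, i1, i2, i3, i4, i5, i6, i7, i8]; linear_combination h) (by simpa using hg (k + 1))]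
    simp only [Gv, Uv, i1, i2, i3, i4, i5, i6, i7, i8]
    ring
  have D6 : deriv (fun t => Bv N lam (k + 1) (p.1, Function.update p.2 (k) t)) (p.2 (k)) =
      Gv N (k + 1) p * (Uv N (k + 1) p * p.1 (k + 1) - p.1 (k + 2) * Gv N k p) / (Gv N k p * Gv N (k + 1) p) ^ 2 := by
    have hf : ∀ s : ℝ, (fun t => Bv N lam (k + 1) (p.1, Function.update p.2 (k) t)) s =
        ((p.1 k * p.2 (k + 2)) + (-(p.1 (k + 2))) * s) / (((p.1 k * p.2 (k + 1)) + (-(p.1 (k + 1))) * s) * ((Gv N (k + 1) p) + (0) * s)) - lam := by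
      intro s
      simp only [Bv, Uv, Gv, Function.update_apply, i1, i2, i3, i4, i5, i6, i7, i8, M1, M1.symm, M2, M2.symm, M3, M3.symm, M4, M4.symm, M5, M5.symm, M6, M6.symm, M7, M7.symm, M8, M8.symm, M9, M9.symm,
        if_true, if_false, ite_true, ite_false, eq_self_iff_true]
      ring
    rw [master _ lam (p.1 k * p.2 (k + 2)) (-(p.1 (k + 2))) (p.1 k * p.2 (k + 1)) (-(p.1 (k + 1))) (Gv N (k + 1) p) (0) (p.2 (k)) hf
      (by intro h; apply hg (k); simp only [Gv, i1, i2, i3, i4, i5, i6, i7, i8]; linear_combination h) (by simpa using hg (k + 1))]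
    simp only [Gv, Uv, i1, i2, i3, i4, i5, i6, i7, i8]
    ring
  have D7 : deriv (fun t => Bv N lam (k + 1) (Function.update p.1 (k + 1) t, p.2)) (p.1 (k + 1)) =
      -(Uv N (k + 1) p) * (Gv N k p * p.2 (k + 2) - p.2 k * Gv N (k + 1) p) / (Gv N k p * Gv N (k + 1) p) ^ 2 := by
    have hf : ∀ s : ℝ, (fun t => Bv N lam (k + 1) (Function.update p.1 (k + 1) t, p.2)) s =
        ((Uv N (k + 1) p) + (0) * s) / (((p.1 k * p.2 (k + 1)) + (-(p.2 k)) * s) * ((-(p.2 (k + 1) * p.1 (k + 2))) + (p.2 (k + 2)) * s)) - lam := by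
      intro s
      simp only [Bv, Uv, Gv, Function.update_apply, i1, i2, i3, i4, i5, i6, i7, i8, M1, M1.symm, M2, M2.symm, M3, M3.symm, M4, M4.symm, M5, M5.symm, M6, M6.symm, M7, M7.symm, M8, M8.symm, M9, M9.symm,
        if_true, if_false, ite_true, ite_false, eq_self_iff_true]
      ring
    rw [master _ lam (Uv N (k + 1) p) (0) (p.1 k * p.2 (k + 1)) (-(p.2 k)) (-(p.2 (k + 1) * p.1 (k + 2))) (p.2 (k + 2)) (p.1 (k + 1)) hf
      (by intro h; apply hg (k); simp only [Gv, i1, i2, i3, i4, i5, i6, i7, i8]; linear_combination h) (by intro h; apply hg (k + 1); simp only [Gv, i1, i2, i3, i4, i5, i6, i7, i8]; linear_combination h)]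
    simp only [Gv, Uv, i1, i2, i3, i4, i5, i6, i7, i8]
    ring
  have D8 : deriv (fun t => Bv N lam (k + 1) (p.1, Function.update p.2 (k + 1) t)) (p.2 (k + 1)) =
      -(Uv N (k + 1) p) * (p.1 k * Gv N (k + 1) p - Gv N k p * p.1 (k + 2)) / (Gv N k p * Gv N (k + 1) p) ^ 2 := by
    have hf : ∀ s : ℝ, (fun t => Bv N lam (k + 1) (p.1, Function.update p.2 (k + 1) t)) s =
        ((Uv N (k + 1) p) + (0) * s) / (((-(p.2 k * p.1 (k + 1))) + (p.1 k) * s) * ((p.1 (k + 1) * p.2 (k + 2)) + (-(p.1 (k + 2))) * s)) - lam := by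
      intro s
      simp only [Bv, Uv, Gv, Function.update_apply, i1, i2, i3, i4, i5, i6, i7, i8, M1, M1.symm, M2, M2.symm, M3, M3.symm, M4, M4.symm, M5, M5.symm, M6, M6.symm, M7, M7.symm, M8, M8.symm, M9, M9.symm,
        if_true, if_false, ite_true, ite_false, eq_self_iff_true]
      ring
    rw [master _ lam (Uv N (k + 1) p) (0) (-(p.2 k * p.1 (k + 1))) (p.1 k) (p.1 (k + 1) * p.2 (k + 2)) (-(p.1 (k + 2))) (p.2 (k + 1)) hf
      (by intro h; apply hg (k); simp only [Gv, i1, i2, i3, i4, i5, i6, i7, i8]; linear_combination h) (by intro h; apply hg (k + 1); simp only [Gv, i1, i2, i3, i4, i5, i6, i7, i8]; linear_combination h)]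
    simp only [Gv, Uv, i1, i2, i3, i4, i5, i6, i7, i8]
    ring
  have D9 : deriv (fun t => Bv N lam (k + 2) (Function.update p.1 (k + 1) t, p.2)) (p.1 (k + 1)) =
      Gv N (k + 2) p * (p.2 (k + 3) * Gv N (k + 1) p - Uv N (k + 2) p * p.2 (k + 2)) / (Gv N (k + 1) p * Gv N (k + 2) p) ^ 2 := by
    have hf : ∀ s : ℝ, (fun t => Bv N lam (k + 2) (Function.update p.1 (k + 1) t, p.2)) s =
        ((-(p.2 (k + 1) * p.1 (k + 3))) + (p.2 (k + 3)) * s) / (((-(p.2 (k + 1) * p.1 (k + 2))) + (p.2 (k + 2)) * s) * ((Gv N (k + 2) p) + (0) * s)) - lam := by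
      intro s
      simp only [Bv, Uv, Gv, Function.update_apply, i1, i2, i3, i4, i5, i6, i7, i8, M1, M1.symm, M2, M2.symm, M3, M3.symm, M4, M4.symm, M5, M5.symm, M6, M6.symm, M7, M7.symm, M8, M8.symm, M9, M9.symm,
        if_true, if_false, ite_true, ite_false, eq_self_iff_true]
      ring
    rw [master _ lam (-(p.2 (k + 1) * p.1 (k + 3))) (p.2 (k + 3)) (-(p.2 (k + 1) * p.1 (k + 2))) (p.2 (k + 2)) (Gv N (k + 2) p) (0) (p.1 (k + 1)) hf
      (by intro h; apply hg (k + 1); simp only [Gv, i1, i2, i3, i4, i5, i6, i7, i8]; linear_combination h) (by simpa using hg (k + 2))]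
    simp only [Gv, Uv, i1, i2, i3, i4, i5, i6, i7, i8]
    ring
  have D10 : deriv (fun t => Bv N lam (k + 2) (p.1, Function.update p.2 (k + 1) t)) (p.2 (k + 1)) =
      Gv N (k + 2) p * (Uv N (k + 2) p * p.1 (k + 2) - p.1 (k + 3) * Gv N (k + 1) p) / (Gv N (k + 1) p * Gv N (k + 2) p) ^ 2 := by
    have hf : ∀ s : ℝ, (fun t => Bv N lam (k + 2) (p.1, Function.update p.2 (k + 1) t)) s =
        ((p.1 (k + 1) * p.2 (k + 3)) + (-(p.1 (k + 3))) * s) / (((p.1 (k + 1) * p.2 (k + 2)) + (-(p.1 (k + 2))) * s) * ((Gv N (k + 2) p) + (0) * s)) - lam := by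
      intro s
      simp only [Bv, Uv, Gv, Function.update_apply, i1, i2, i3, i4, i5, i6, i7, i8, M1, M1.symm, M2, M2.symm, M3, M3.symm, M4, M4.symm, M5, M5.symm, M6, M6.symm, M7, M7.symm, M8, M8.symm, M9, M9.symm,
        if_true, if_false, ite_true, ite_false, eq_self_iff_true]
      ring
    rw [master _ lam (p.1 (k + 1) * p.2 (k + 3)) (-(p.1 (k + 3))) (p.1 (k + 1) * p.2 (k + 2)) (-(p.1 (k + 2))) (Gv N (k + 2) p) (0) (p.2 (k + 1)) hf
      (by intro h; apply hg (k + 1); simp only [Gv, i1, i2, i3, i4, i5, i6, i7, i8]; linear_combination h) (by simpa using hg (k + 2))]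
    simp only [Gv, Uv, i1, i2, i3, i4, i5, i6, i7, i8]
    ring
  have D11 : deriv (fun t => Bv N lam k (Function.update p.1 (k - 1) t, p.2)) (p.1 (k - 1)) =
      Gv N k p * (p.2 (k + 1) * Gv N (k - 1) p - Uv N k p * p.2 k) / (Gv N (k - 1) p * Gv N k p) ^ 2 := by
    have hf : ∀ s : ℝ, (fun t => Bv N lam k (Function.update p.1 (k - 1) t, p.2)) s =
        ((-(p.2 (k - 1) * p.1 (k + 1))) + (p.2 (k + 1)) * s) / (((-(p.2 (k - 1) * p.1 k)) + (p.2 k) * s) * ((Gv N k p) + (0) * s)) - lam := by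
      intro s
      simp only [Bv, Uv, Gv, Function.update_apply, i1, i2, i3, i4, i5, i6, i7, i8, M1, M1.symm, M2, M2.symm, M3, M3.symm, M4, M4.symm, M5, M5.symm, M6, M6.symm, M7, M7.symm, M8, M8.symm, M9, M9.symm,
        if_true, if_false, ite_true, ite_false, eq_self_iff_true]
      ring
    rw [master _ lam (-(p.2 (k - 1) * p.1 (k + 1))) (p.2 (k + 1)) (-(p.2 (k - 1) * p.1 k)) (p.2 k) (Gv N k p) (0) (p.1 (k - 1)) hf
      (by intro h; apply hg (k - 1); simp only [Gv, i1, i2, i3, i4, i5, i6, i7, i8]; linear_combination h) (by simpa using hg (k))]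
    simp only [Gv, Uv, i1, i2, i3, i4, i5, i6, i7, i8]
    ring
  have D12 : deriv (fun t => Bv N lam k (p.1, Function.update p.2 (k - 1) t)) (p.2 (k - 1)) =
      Gv N k p * (Uv N k p * p.1 k - p.1 (k + 1) * Gv N (k - 1) p) / (Gv N (k - 1) p * Gv N k p) ^ 2 := by
    have hf : ∀ s : ℝ, (fun t => Bv N lam k (p.1, Function.update p.2 (k - 1) t)) s =
        ((p.1 (k - 1) * p.2 (k + 1)) + (-(p.1 (k + 1))) * s) / (((p.1 (k - 1) * p.2 k) + (-(p.1 k)) * s) * ((Gv N k p) + (0) * s)) - lam := by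
      intro s
      simp only [Bv, Uv, Gv, Function.update_apply, i1, i2, i3, i4, i5, i6, i7, i8, M1, M1.symm, M2, M2.symm, M3, M3.symm, M4, M4.symm, M5, M5.symm, M6, M6.symm, M7, M7.symm, M8, M8.symm, M9, M9.symm,
        if_true, if_false, ite_true, ite_false, eq_self_iff_true]
      ring
    rw [master _ lam (p.1 (k - 1) * p.2 (k + 1)) (-(p.1 (k + 1))) (p.1 (k - 1) * p.2 k) (-(p.1 k)) (Gv N k p) (0) (p.2 (k - 1)) hf
      (by intro h; apply hg (k - 1); simp only [Gv, i1, i2, i3, i4, i5, i6, i7, i8]; linear_combination h) (by simpa using hg (k))]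
    simp only [Gv, Uv, i1, i2, i3, i4, i5, i6, i7, i8]
    ring
  have D13 : deriv (fun t => Bv N lam (k - 2) (Function.update p.1 (k - 1) t, p.2)) (p.1 (k - 1)) =
      Gv N (k - 3) p * (Uv N (k - 2) p * p.2 (k - 2) - p.2 (k - 3) * Gv N (k - 2) p) / (Gv N (k - 3) p * Gv N (k - 2) p) ^ 2 := by
    have hf : ∀ s : ℝ, (fun t => Bv N lam (k - 2) (Function.update p.1 (k - 1) t, p.2)) s =
        ((p.1 (k - 3) * p.2 (k - 1)) + (-(p.2 (k - 3))) * s) / (((Gv N (k - 3) p) + (0) * s) * ((p.1 (k - 2) * p.2 (k - 1)) + (-(p.2 (k - 2))) * s)) - lam := by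
      intro s
      simp only [Bv, Uv, Gv, Function.update_apply, i1, i2, i3, i4, i5, i6, i7, i8, M1, M1.symm, M2, M2.symm, M3, M3.symm, M4, M4.symm, M5, M5.symm, M6, M6.symm, M7, M7.symm, M8, M8.symm, M9, M9.symm,
        if_true, if_false, ite_true, ite_false, eq_self_iff_true]
      ring
    rw [master _ lam (p.1 (k - 3) * p.2 (k - 1)) (-(p.2 (k - 3))) (Gv N (k - 3) p) (0) (p.1 (k - 2) * p.2 (k - 1)) (-(p.2 (k - 2))) (p.1 (k - 1)) hf
      (by simpa using hg (k - 3)) (by intro h; apply hg (k - 2); simp only [Gv, i1, i2, i3, i4, i5, i6, i7, i8]; linear_combination h)]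
    simp only [Gv, Uv, i1, i2, i3, i4, i5, i6, i7, i8]
    ring
  have D14 : deriv (fun t => Bv N lam (k - 2) (p.1, Function.update p.2 (k - 1) t)) (p.2 (k - 1)) =
      Gv N (k - 3) p * (p.1 (k - 3) * Gv N (k - 2) p - Uv N (k - 2) p * p.1 (k - 2)) / (Gv N (k - 3) p * Gv N (k - 2) p) ^ 2 := by
    have hf : ∀ s : ℝ, (fun t => Bv N lam (k - 2) (p.1, Function.update p.2 (k - 1) t)) s =
        ((-(p.2 (k - 3) * p.1 (k - 1))) + (p.1 (k - 3)) * s) / (((Gv N (k - 3) p) + (0) * s) * ((-(p.2 (k - 2) * p.1 (k - 1))) + (p.1 (k - 2)) * s)) - lam := by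
      intro s
      simp only [Bv, Uv, Gv, Function.update_apply, i1, i2, i3, i4, i5, i6, i7, i8, M1, M1.symm, M2, M2.symm, M3, M3.symm, M4, M4.symm, M5, M5.symm, M6, M6.symm, M7, M7.symm, M8, M8.symm, M9, M9.symm,
        if_true, if_false, ite_true, ite_false, eq_self_iff_true]
      ring
    rw [master _ lam (-(p.2 (k - 3) * p.1 (k - 1))) (p.1 (k - 3)) (Gv N (k - 3) p) (0) (-(p.2 (k - 2) * p.1 (k - 1))) (p.1 (k - 2)) (p.2 (k - 1)) hf
      (by simpa using hg (k - 3)) (by intro h; apply hg (k - 2); simp only [Gv, i1, i2, i3, i4, i5, i6, i7, i8]; linear_combination h)]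
    simp only [Gv, Uv, i1, i2, i3, i4, i5, i6, i7, i8]
    ring
  constructor
  · simp only [pb]
    rw [← Finset.sum_subset (Finset.subset_univ ({k, k + 1} : Finset (ZMod N))) ?hz]
    case hz =>
      intro i _ hi
      simp only [Finset.mem_insert, Finset.mem_singleton] at hi
      push_neg at hi
      obtain ⟨hik, hik1⟩ := hi
      by_cases hia : i = k - 1
      · subst hia
        rw [dBy_zero N lam p (m := k + 1) (i := k - 1)
            (fun h => M1.symm (by linear_combination h)) M3.symm
            (fun h => M7.symm (by linear_combination h)),
          dBx_zero N lam p (m := k + 1) (i := k - 1)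
            (fun h => M1.symm (by linear_combination h)) M3.symm
            (fun h => M7.symm (by linear_combination h))]
        ring
      · rw [dBx_zero N lam p (m := k) (i := i) (fun h => hia h.symm)
            (fun h => hik h.symm) (fun h => hik1 h.symm),
          dBy_zero N lam p (m := k) (i := i) (fun h => hia h.symm)
            (fun h => hik h.symm) (fun h => hik1 h.symm)]
        ring
    rw [Finset.sum_pair M2]
    rw [D1, D2, D3, D4, D5, D6, D7, D8]
    simp only [Av, Bv, Uv, Gv, i1, i2, i6]
    field_simp [show p.2 (k + 1) * p.1 k - p.1 (k + 1) * p.2 k ≠ 0 from fun h => hB (by linear_combination h)]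
    ring
  · intro j hj1 hj2
    by_cases hjk : j = k
    · subst hjk
      simp only [pb]
      rw [Finset.sum_eq_zero fun i _ => by ring, mul_zero]
    · simp only [pb]
      rw [Finset.sum_eq_zero, mul_zero]
      intro i _
      by_cases hik : i = k - 1
      · subst hik
        by_cases hjk2 : j = k - 2
        · subst hjk2
          rw [D11, D12, D13, D14]
          simp only [Uv, Gv, i1, i4, i5, i8]
          field_simp
          ring
        · rw [dBy_zero N lam p (m := j) (i := k - 1)
              (fun h => hjk (by linear_combination h))
              hj1 (fun h => hjk2 (by linear_combination h)),
            dBx_zero N lam p (m := j) (i := k - 1)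
              (fun h => hjk (by linear_combination h))
              hj1 (fun h => hjk2 (by linear_combination h))]
          ring
      · by_cases hik1 : i = k + 1
        · subst hik1
          by_cases hjk2 : j = k + 2
          · subst hjk2
            rw [D3, D4, D9, D10]
            simp only [Uv, Gv, i1, i2, i3, i7]
            field_simp
            ring
          · rw [dBy_zero N lam p (m := j) (i := k + 1)
                (fun h => hjk2 (by linear_combination h))
                hj2 (fun h => hjk (by linear_combination h)),
              dBx_zero N lam p (m := j) (i := k + 1)
                (fun h => hjk2 (by linear_combination h))
                hj2 (fun h => hjk (by linear_combination h))]
            ring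
        · by_cases hikk : i = k
          · rw [dBy_zero N lam p (m := j) (i := i)
                (fun h => hj2 (by linear_combination h + hikk))
                (fun h => hjk (h.trans hikk))
                (fun h => hj1 (by linear_combination h + hikk)),
              dBx_zero N lam p (m := j) (i := i)
                (fun h => hj2 (by linear_combination h + hikk))
                (fun h => hjk (h.trans hikk))
                (fun h => hj1 (by linear_combination h + hikk))]
            ring
          · rw [dBx_zero N lam p (m := k) (i := i) (fun h => hik h.symm)
                (fun h => hikk h.symm) (fun h => hik1 h.symm),
              dBy_zero N lam p (m := k) (i := i) (fun h => hik h.symm)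
                (fun h => hikk h.symm) (fun h => hik1 h.symm)]
            ring
end
end

section
/- With the canonical bracket {x_i, y_i} = 1/2 and the variables a_k = g_k^{-2}, b_k = u_k/(g_{k-1} g_k) - λ, one has {b_k, a_{k-2}} = a_{k-2} a_{k-1}. -/
noncomputable section

open Function

lemma LB1 (b c d e f l x : ℝ) (h : (x*d - e)*f ≠ 0) :
    deriv (fun t => (t*b - c)/((t*d - e)*f) - l) x
      = (b*((x*d - e)*f) - (x*b - c)*(d*f))/(((x*d - e)*f)^2) := by
  have h1 : HasDerivAt (fun t : ℝ => t*b - c) b x := by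
    simpa using ((hasDerivAt_id x).mul_const b).sub_const c
  have h2 : HasDerivAt (fun t : ℝ => (t*d - e)*f) (d*f) x := by
    simpa using (((hasDerivAt_id x).mul_const d).sub_const e).mul_const f
  exact ((h1.div h2 h).sub_const l).deriv

lemma LB2 (a c e g f l x : ℝ) (h : (e - x*g)*f ≠ 0) :
    deriv (fun t => (a - t*c)/((e - t*g)*f) - l) x
      = ((-c)*((e - x*g)*f) - (a - x*c)*(-(g*f)))/(((e - x*g)*f)^2) := by
  have h1 : HasDerivAt (fun t : ℝ => a - t*c) (-c) x := by
    simpa using ((hasDerivAt_id x).mul_const c).const_sub a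
  have h2 : HasDerivAt (fun t : ℝ => (e - t*g)*f) (-(g*f)) x := by
    simpa using ((hasDerivAt_const x e).sub ((hasDerivAt_id x).mul_const g)).mul_const f
  exact ((h1.div h2 h).sub_const l).deriv

lemma LA2 (a c x : ℝ) (h : a*x - c ≠ 0) :
    deriv (fun t => ((a*t - c)^2)⁻¹) x = -(2*(a*x - c)*a)/(((a*x - c)^2)^2) := by
  have h0 : HasDerivAt (fun t : ℝ => a*t - c) a x := by
    simpa using ((hasDerivAt_id x).const_mul a).sub_const c
  have hp : HasDerivAt (fun t : ℝ => (a*t - c)^2) (2*(a*x - c)*a) x := by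
    simpa using h0.fun_pow 2
  exact (hp.inv (pow_ne_zero 2 h)).deriv

lemma LA1 (a c x : ℝ) (h : a - c*x ≠ 0) :
    deriv (fun t => ((a - c*t)^2)⁻¹) x = -(2*(a - c*x)*(-c))/(((a - c*x)^2)^2) := by
  have h0 : HasDerivAt (fun t : ℝ => a - c*t) (-c) x := by
    simpa using ((hasDerivAt_id x).const_mul c).const_sub a
  have hp : HasDerivAt (fun t : ℝ => (a - c*t)^2) (2*(a - c*x)*(-c)) x := by
    simpa using h0.fun_pow 2
  exact (hp.inv (pow_ne_zero 2 h)).deriv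


theorem stmt8 (N : ℕ) [NeZero N] (hN : 3 < N) (lam : ℝ)
    (p : (ZMod N → ℝ) × (ZMod N → ℝ)) (hg : ∀ k, Gv N k p ≠ 0) (k : ZMod N) :
    pb N (Bv N lam k) (Av N (k - 2)) p = Av N (k - 2) p * Av N (k - 1) p := by
  haveI : Fact (1 < N) := ⟨by omega⟩
  have h1 : (1 : ZMod N) ≠ 0 := one_ne_zero
  have h2 : (2 : ZMod N) ≠ 0 := by
    intro h
    have h' : ((2 : ℕ) : ZMod N) = 0 := by push_cast; exact h
    have := Nat.le_of_dvd (by norm_num) ((ZMod.natCast_eq_zero_iff 2 N).mp h')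
    omega
  have h3 : (3 : ZMod N) ≠ 0 := by
    intro h
    have h' : ((3 : ℕ) : ZMod N) = 0 := by push_cast; exact h
    have := Nat.le_of_dvd (by norm_num) ((ZMod.natCast_eq_zero_iff 3 N).mp h')
    omega
  have e1 : k - 1 + 1 = k := by ring
  have e2 : k - 2 + 1 = k - 1 := by ring
  have n12 : k - 1 ≠ k - 2 := fun h => h1 (by linear_combination h)
  have nk1 : k ≠ k - 1 := fun h => h1 (by linear_combination h)
  have np1 : k + 1 ≠ k - 1 := fun h => h2 (by linear_combination h)
  have nk2 : k ≠ k - 2 := fun h => h2 (by linear_combination h)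
  have np2 : k + 1 ≠ k - 2 := fun h => h3 (by linear_combination h)
  have hg1 : p.1 (k - 2) * p.2 (k - 1) - p.2 (k - 2) * p.1 (k - 1) ≠ 0 := by
    have := hg (k - 2); rwa [Gv, e2] at this
  have hg2 : p.1 (k - 1) * p.2 k - p.2 (k - 1) * p.1 k ≠ 0 := by
    have := hg (k - 1); rwa [Gv, e1] at this
  have hg3 : p.1 k * p.2 (k + 1) - p.2 k * p.1 (k + 1) ≠ 0 := hg k
  have hne : (p.1 (k - 1) * p.2 k - p.2 (k - 1) * p.1 k) *
      (p.1 k * p.2 (k + 1) - p.2 k * p.1 (k + 1)) ≠ 0 := mul_ne_zero hg2 hg3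
  unfold pb
  rw [Finset.sum_eq_single_of_mem (k - 1) (Finset.mem_univ _) ?side]
  case side =>
    intro i _ hi
    by_cases hi2 : i = k - 2
    · subst hi2
      have cx : (fun t => Bv N lam k (Function.update p.1 (k-2) t, p.2)) = fun _ => Bv N lam k p := by
        funext t
        simp [Bv, Uv, Gv, e1, Function.update_apply, n12, nk2, np2]
      have cy : (fun t => Bv N lam k (p.1, Function.update p.2 (k-2) t)) = fun _ => Bv N lam k p := by
        funext t
        simp [Bv, Uv, Gv, e1, Function.update_apply, n12, nk2, np2]
      rw [cx, cy, deriv_const, deriv_const]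
      ring
    · have cx : (fun t => Av N (k-2) (Function.update p.1 i t, p.2)) = fun _ => Av N (k-2) p := by
        funext t
        simp [Av, Gv, e2, Function.update_apply, Ne.symm hi2, Ne.symm hi]
      have cy : (fun t => Av N (k-2) (p.1, Function.update p.2 i t)) = fun _ => Av N (k-2) p := by
        funext t
        simp [Av, Gv, e2, Function.update_apply, Ne.symm hi2, Ne.symm hi]
      rw [cx, cy, deriv_const, deriv_const]
      ring
  · simp only [Bv, Uv, Av, Gv, e1, e2, Function.update_apply, if_true,
      if_neg nk1, if_neg np1, if_neg (Ne.symm n12)]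
    rw [LB1 _ _ _ _ _ _ _ hne, LB2 _ _ _ _ _ _ _ hne, LA2 _ _ _ hg1, LA1 _ _ _ hg1]
    field_simp
    have ha : p.2 (k + 1) * p.1 k - p.2 k * p.1 (k + 1) ≠ 0 := fun h => hg3 (by linear_combination h)
    have hb : p.2 (k - 1) * p.1 (k - 2) - p.1 (k - 1) * p.2 (k - 2) ≠ 0 := fun h => hg1 (by linear_combination h)
    rw [div_eq_div_iff (mul_ne_zero ha (pow_ne_zero 3 hb)) (pow_ne_zero 2 hb)]
    ring
end
end

section
/- With the canonical bracket {x_i, y_i} = 1/2 and the variables a_k = g_k^{-2}, b_k = u_k/(g_{k-1} g_k) - λ, one has {b_k, a_{k-1}} = a_{k-1}(b_k² + a_{k-1}) + 2 b_k a_{k-1} λ + a_{k-1} λ². -/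
noncomputable section

open Function

theorem stmt9 (N : ℕ) [NeZero N] (hN : 3 < N) (lam : ℝ)
    (p : (ZMod N → ℝ) × (ZMod N → ℝ)) (hg : ∀ k, Gv N k p ≠ 0) (k : ZMod N) :
    pb N (Bv N lam k) (Av N (k - 1)) p =
      Av N (k - 1) p * (Bv N lam k p ^ 2 + Av N (k - 1) p)
        + 2 * Bv N lam k p * Av N (k - 1) p * lam + Av N (k - 1) p * lam ^ 2 := by
  classical
  haveI : Fact (1 < N) := ⟨by omega⟩
  have h1 : (1 : ZMod N) ≠ 0 := one_ne_zero
  have h2 : (2 : ZMod N) ≠ 0 := by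
    have : ((2 : ℕ) : ZMod N) ≠ 0 := by
      rw [Ne, ZMod.natCast_eq_zero_iff]
      intro h
      have := Nat.le_of_dvd (by norm_num) h
      omega
    simpa using this
  have ne_k1_k : (k - 1 : ZMod N) ≠ k := fun h => h1 (by linear_combination -h)
  have ne_k_k1 : k ≠ k - 1 := ne_k1_k.symm
  have ne_kp1_k1 : (k + 1 : ZMod N) ≠ k - 1 := fun h => h2 (by linear_combination h)
  have ne_kp1_k : (k + 1 : ZMod N) ≠ k := fun h => h1 (by linear_combination h)
  set A := p.1 (k - 1) with hA
  set B := p.1 k with hB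
  set C := p.1 (k + 1) with hC
  set D := p.2 (k - 1) with hD
  set E := p.2 k with hE
  set F := p.2 (k + 1) with hF
  have hg1 : A * E - D * B ≠ 0 := by
    have := hg (k - 1); simpa [Gv, sub_add_cancel, ← hA, ← hB, ← hD, ← hE] using this
  have hg2 : B * F - E * C ≠ 0 := by
    have := hg k; simpa [Gv, ← hB, ← hC, ← hE, ← hF] using this
  -- function rewrites
  have e1 : (fun t => Bv N lam k (Function.update p.1 (k - 1) t, p.2))
      = fun t => (t * F - D * C) / ((t * E - D * B) * (B * F - E * C)) - lam := by
    funext t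
    simp [Bv, Uv, Gv, sub_add_cancel, Function.update_apply, ne_k_k1, ne_kp1_k1]; rfl
  have e2 : (fun t => Bv N lam k (p.1, Function.update p.2 (k - 1) t))
      = fun t => (A * F - t * C) / ((A * E - t * B) * (B * F - E * C)) - lam := by
    funext t
    simp [Bv, Uv, Gv, sub_add_cancel, Function.update_apply, ne_k_k1, ne_kp1_k1]; rfl
  have e3 : (fun t => Bv N lam k (Function.update p.1 k t, p.2))
      = fun t => (A * F - D * C) / ((A * E - D * t) * (t * F - E * C)) - lam := by
    funext t
    simp [Bv, Uv, Gv, sub_add_cancel, Function.update_apply, ne_k1_k, ne_kp1_k]; rfl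
  have e4 : (fun t => Bv N lam k (p.1, Function.update p.2 k t))
      = fun t => (A * F - D * C) / ((A * t - D * B) * (B * F - t * C)) - lam := by
    funext t
    simp [Bv, Uv, Gv, sub_add_cancel, Function.update_apply, ne_k1_k, ne_kp1_k]; rfl
  have e5 : (fun t => Av N (k - 1) (Function.update p.1 (k - 1) t, p.2))
      = fun t => (((t * E - D * B)) ^ 2)⁻¹ := by
    funext t
    simp [Av, Gv, sub_add_cancel, Function.update_apply, ne_k_k1]; rfl
  have e6 : (fun t => Av N (k - 1) (p.1, Function.update p.2 (k - 1) t))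
      = fun t => (((A * E - t * B)) ^ 2)⁻¹ := by
    funext t
    simp [Av, Gv, sub_add_cancel, Function.update_apply, ne_k_k1]; rfl
  have e7 : (fun t => Av N (k - 1) (Function.update p.1 k t, p.2))
      = fun t => (((A * E - D * t)) ^ 2)⁻¹ := by
    funext t
    simp [Av, Gv, sub_add_cancel, Function.update_apply, ne_k1_k]; rfl
  have e8 : (fun t => Av N (k - 1) (p.1, Function.update p.2 k t))
      = fun t => (((A * t - D * B)) ^ 2)⁻¹ := by
    funext t
    simp [Av, Gv, sub_add_cancel, Function.update_apply, ne_k1_k]; rfl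
  -- derivatives
  have hgg : (A * E - D * B) * (B * F - E * C) ≠ 0 := mul_ne_zero hg1 hg2
  have d1 := ((((hasDerivAt_id' (x := A)).mul_const F).sub_const (D * C)).div
      ((((hasDerivAt_id' (x := A)).mul_const E).sub_const (D * B)).mul_const (B * F - E * C))
      hgg).sub_const lam
  have d2 := ((((hasDerivAt_id' (x := D)).mul_const C).const_sub (A * F)).div
      ((((hasDerivAt_id' (x := D)).mul_const B).const_sub (A * E)).mul_const (B * F - E * C))
      hgg).sub_const lam
  have d3 := ((hasDerivAt_const B (A * F - D * C)).div
      (((((hasDerivAt_id' (x := B)).const_mul D).const_sub (A * E))).mul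
        (((hasDerivAt_id' (x := B)).mul_const F).sub_const (E * C)))
      hgg).sub_const lam
  have d4 := ((hasDerivAt_const E (A * F - D * C)).div
      (((((hasDerivAt_id' (x := E)).const_mul A).sub_const (D * B))).mul
        (((hasDerivAt_id' (x := E)).mul_const C).const_sub (B * F)))
      hgg).sub_const lam
  have hsq : (A * E - D * B) ^ 2 ≠ 0 := pow_ne_zero 2 hg1
  have d5 := ((((hasDerivAt_id' (x := A)).mul_const E).sub_const (D * B)).pow 2).inv hsq
  have d6 := ((((hasDerivAt_id' (x := D)).mul_const B).const_sub (A * E)).pow 2).inv hsq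
  have d7 := ((((hasDerivAt_id' (x := B)).const_mul D).const_sub (A * E)).pow 2).inv hsq
  have d8 := ((((hasDerivAt_id' (x := E)).const_mul A).sub_const (D * B)).pow 2).inv hsq
  have rA : Av N (k - 1) p = ((A * E - D * B) ^ 2)⁻¹ := by
    simp [Av, Gv, sub_add_cancel, hA, hB, hD, hE]
  have rB : Bv N lam k p = (A * F - D * C) / ((A * E - D * B) * (B * F - E * C)) - lam := by
    simp [Bv, Uv, Gv, sub_add_cancel, hA, hB, hC, hD, hE, hF]
  simp only [pb]
  rw [← Finset.sum_subset (Finset.subset_univ ({k - 1, k} : Finset (ZMod N)))]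
  · rw [Finset.sum_pair ne_k1_k, e1, e2, e3, e4, e5, e6, e7, e8, ← hA, ← hB, ← hD, ← hE]
    erw [d1.deriv, d2.deriv, d3.deriv, d4.deriv, d5.deriv, d6.deriv, d7.deriv, d8.deriv,
      rA, rB]
    simp only [Pi.pow_apply, Pi.mul_apply, Pi.inv_apply]
    have hg2' : F * B - E * C ≠ 0 := by rwa [mul_comm F B]
    field_simp
    ring
  · intro i _ hi
    simp only [Finset.mem_insert, Finset.mem_singleton, not_or] at hi
    have c1 : (fun t => Av N (k - 1) (p.1, Function.update p.2 i t))
        = fun _ => Av N (k - 1) p := by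
      funext t
      simp [Av, Gv, sub_add_cancel, Function.update_apply, Ne.symm hi.1, Ne.symm hi.2]
    have c2 : (fun t => Av N (k - 1) (Function.update p.1 i t, p.2))
        = fun _ => Av N (k - 1) p := by
      funext t
      simp [Av, Gv, sub_add_cancel, Function.update_apply, Ne.symm hi.1, Ne.symm hi.2]
    rw [c1, c2]
    simp
end
end

section
/- With the canonical bracket {x_i, y_i} = 1/2 and the variables a_k = g_k^{-2}, b_k = u_k/(g_{k-1} g_k) - λ, one has {b_k, a_{k+1}} = -a_k a_{k+1}, and {b_k, a_j} = 0 for j ∉ {k-2, k-1, k, k+1} (mod N). -/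
noncomputable section

open Function

/-! ### Auxiliary derivative computations -/

section Aux

variable {N : ℕ} (p : (ZMod N → ℝ) × (ZMod N → ℝ))

lemma hasDerivAt_ite' (c : Prop) [Decidable c] (a t : ℝ) :
    HasDerivAt (fun s : ℝ => if c then s else a) (if c then 1 else 0) t := by
  split_ifs
  · exact hasDerivAt_id t
  · exact hasDerivAt_const t a

def DGx (p : (ZMod N → ℝ) × (ZMod N → ℝ)) (j i : ZMod N) : ℝ :=
  (if j = i then p.2 (j+1) else 0) - (if j+1 = i then p.2 j else 0)
def DGy (p : (ZMod N → ℝ) × (ZMod N → ℝ)) (j i : ZMod N) : ℝ :=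
  (if j+1 = i then p.1 j else 0) - (if j = i then p.1 (j+1) else 0)
def DUx (p : (ZMod N → ℝ) × (ZMod N → ℝ)) (k i : ZMod N) : ℝ :=
  (if k-1 = i then p.2 (k+1) else 0) - (if k+1 = i then p.2 (k-1) else 0)
def DUy (p : (ZMod N → ℝ) × (ZMod N → ℝ)) (k i : ZMod N) : ℝ :=
  (if k+1 = i then p.1 (k-1) else 0) - (if k-1 = i then p.1 (k+1) else 0)

lemma hGx (j i : ZMod N) :
    HasDerivAt (fun t => Gv N j (Function.update p.1 i t, p.2)) (DGx p j i) (p.1 i) := by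
  simp only [Gv, Function.update_apply]
  have h1 := (hasDerivAt_ite' (j = i) (p.1 j) (p.1 i)).mul_const (p.2 (j+1))
  have h2 := (hasDerivAt_ite' (j+1 = i) (p.1 (j+1)) (p.1 i)).const_mul (p.2 j)
  refine (h1.sub h2).congr_deriv ?_
  simp only [DGx]; split_ifs <;> ring

lemma hGy (j i : ZMod N) :
    HasDerivAt (fun t => Gv N j (p.1, Function.update p.2 i t)) (DGy p j i) (p.2 i) := by
  simp only [Gv, Function.update_apply]
  have h1 := (hasDerivAt_ite' (j+1 = i) (p.2 (j+1)) (p.2 i)).const_mul (p.1 j)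
  have h2 := (hasDerivAt_ite' (j = i) (p.2 j) (p.2 i)).mul_const (p.1 (j+1))
  refine (h1.sub h2).congr_deriv ?_
  simp only [DGy]; split_ifs <;> ring

lemma hUx (k i : ZMod N) :
    HasDerivAt (fun t => Uv N k (Function.update p.1 i t, p.2)) (DUx p k i) (p.1 i) := by
  simp only [Uv, Function.update_apply]
  have h1 := (hasDerivAt_ite' (k-1 = i) (p.1 (k-1)) (p.1 i)).mul_const (p.2 (k+1))
  have h2 := (hasDerivAt_ite' (k+1 = i) (p.1 (k+1)) (p.1 i)).const_mul (p.2 (k-1))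
  refine (h1.sub h2).congr_deriv ?_
  simp only [DUx]; split_ifs <;> ring

lemma hUy (k i : ZMod N) :
    HasDerivAt (fun t => Uv N k (p.1, Function.update p.2 i t)) (DUy p k i) (p.2 i) := by
  simp only [Uv, Function.update_apply]
  have h1 := (hasDerivAt_ite' (k+1 = i) (p.2 (k+1)) (p.2 i)).const_mul (p.1 (k-1))
  have h2 := (hasDerivAt_ite' (k-1 = i) (p.2 (k-1)) (p.2 i)).mul_const (p.1 (k+1))
  refine (h1.sub h2).congr_deriv ?_
  simp only [DUy]; split_ifs <;> ring

def DAx (p : (ZMod N → ℝ) × (ZMod N → ℝ)) (j i : ZMod N) : ℝ :=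
  -(2 * Gv N j p * DGx p j i) / (Gv N j p ^ 2) ^ 2
def DAy (p : (ZMod N → ℝ) × (ZMod N → ℝ)) (j i : ZMod N) : ℝ :=
  -(2 * Gv N j p * DGy p j i) / (Gv N j p ^ 2) ^ 2
def DBx (p : (ZMod N → ℝ) × (ZMod N → ℝ)) (k i : ZMod N) : ℝ :=
  (DUx p k i * (Gv N (k-1) p * Gv N k p) -
    Uv N k p * (DGx p (k-1) i * Gv N k p + Gv N (k-1) p * DGx p k i)) /
    (Gv N (k-1) p * Gv N k p) ^ 2
def DBy (p : (ZMod N → ℝ) × (ZMod N → ℝ)) (k i : ZMod N) : ℝ :=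
  (DUy p k i * (Gv N (k-1) p * Gv N k p) -
    Uv N k p * (DGy p (k-1) i * Gv N k p + Gv N (k-1) p * DGy p k i)) /
    (Gv N (k-1) p * Gv N k p) ^ 2

lemma hAx (j i : ZMod N) (hg : Gv N j p ≠ 0) :
    HasDerivAt (fun t => Av N j (Function.update p.1 i t, p.2)) (DAx p j i) (p.1 i) := by
  have e : Function.update p.1 i (p.1 i) = p.1 := Function.update_eq_self i p.1
  have h := ((hGx p j i).pow 2).inv (by simp only [Pi.pow_apply, e]; exact pow_ne_zero 2 hg)
  simp only [Pi.pow_apply, e] at h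
  have h2 : HasDerivAt (fun t => Av N j (Function.update p.1 i t, p.2))
      (-(↑2 * Gv N j p ^ (2-1) * DGx p j i) / (Gv N j p ^ 2) ^ 2) (p.1 i) := h
  convert h2 using 1
  simp [DAx]

lemma hAy (j i : ZMod N) (hg : Gv N j p ≠ 0) :
    HasDerivAt (fun t => Av N j (p.1, Function.update p.2 i t)) (DAy p j i) (p.2 i) := by
  have e : Function.update p.2 i (p.2 i) = p.2 := Function.update_eq_self i p.2
  have h := ((hGy p j i).pow 2).inv (by simp only [Pi.pow_apply, e]; exact pow_ne_zero 2 hg)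
  simp only [Pi.pow_apply, e] at h
  have h2 : HasDerivAt (fun t => Av N j (p.1, Function.update p.2 i t))
      (-(↑2 * Gv N j p ^ (2-1) * DGy p j i) / (Gv N j p ^ 2) ^ 2) (p.2 i) := h
  convert h2 using 1
  simp [DAy]

lemma hBx (lam : ℝ) (k i : ZMod N) (h0 : Gv N (k-1) p ≠ 0) (h1 : Gv N k p ≠ 0) :
    HasDerivAt (fun t => Bv N lam k (Function.update p.1 i t, p.2)) (DBx p k i) (p.1 i) := by
  have e : Function.update p.1 i (p.1 i) = p.1 := Function.update_eq_self i p.1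
  have h := ((hUx p k i).div ((hGx p (k-1) i).mul (hGx p k i))
    (by simp only [Pi.mul_apply, e]; exact mul_ne_zero h0 h1)).sub_const lam
  simp only [Pi.mul_apply, e] at h
  exact h

lemma hBy (lam : ℝ) (k i : ZMod N) (h0 : Gv N (k-1) p ≠ 0) (h1 : Gv N k p ≠ 0) :
    HasDerivAt (fun t => Bv N lam k (p.1, Function.update p.2 i t)) (DBy p k i) (p.2 i) := by
  have e : Function.update p.2 i (p.2 i) = p.2 := Function.update_eq_self i p.2
  have h := ((hUy p k i).div ((hGy p (k-1) i).mul (hGy p k i))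
    (by simp only [Pi.mul_apply, e]; exact mul_ne_zero h0 h1)).sub_const lam
  simp only [Pi.mul_apply, e] at h
  exact h

end Aux

set_option maxHeartbeats 1000000 in
theorem stmt11 (N : ℕ) [NeZero N] (hN : 3 < N) (lam : ℝ)
    (p : (ZMod N → ℝ) × (ZMod N → ℝ)) (hg : ∀ k, Gv N k p ≠ 0) (k : ZMod N) :
    pb N (Bv N lam k) (Av N (k + 1)) p = -(Av N k p) * Av N (k + 1) p ∧
    ∀ j : ZMod N, j ≠ k - 2 → j ≠ k - 1 → j ≠ k → j ≠ k + 1 →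
      pb N (Bv N lam k) (Av N j) p = 0 := by
  have hn1 : (1 : ZMod N) ≠ 0 := by
    simpa using (ZMod.natCast_eq_zero_iff 1 N).not.mpr (fun h => by have := Nat.le_of_dvd (by norm_num) h; omega)
  have hn2 : (2 : ZMod N) ≠ 0 := by
    simpa using (ZMod.natCast_eq_zero_iff 2 N).not.mpr (fun h => by have := Nat.le_of_dvd (by norm_num) h; omega)
  have hn3 : (3 : ZMod N) ≠ 0 := by
    simpa using (ZMod.natCast_eq_zero_iff 3 N).not.mpr (fun h => by have := Nat.le_of_dvd (by norm_num) h; omega)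
  have hpb : ∀ j : ZMod N, pb N (Bv N lam k) (Av N j) p =
      (1/2) * ∑ i : ZMod N, (DBx p k i * DAy p j i - DBy p k i * DAx p j i) := by
    intro j
    simp only [pb]
    congr 1
    refine Finset.sum_congr rfl fun i _ => ?_
    rw [(hBx p lam k i (hg _) (hg _)).deriv, (hAy p j i (hg _)).deriv,
      (hBy p lam k i (hg _) (hg _)).deriv, (hAx p j i (hg _)).deriv]
  constructor
  · rw [hpb (k+1)]
    rw [Finset.sum_eq_single_of_mem (k+1) (Finset.mem_univ _) ?side]
    case side =>
      intro i _ hi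
      have c1 : ¬(k + 1 = i) := fun h => hi h.symm
      by_cases c2 : k + 1 + 1 = i
      · have d1 : ¬(k - 1 = i) := by
          rw [← c2]; intro h; exact hn3 (by linear_combination -h)
        have d2 : ¬(k = i) := by
          rw [← c2]; intro h; exact hn2 (by linear_combination -h)
        have e1 : (k - 1 + 1 : ZMod N) = k := by ring
        simp only [DBx, DBy, DUx, DUy, DGx, DGy, e1, if_neg c1, if_neg d1, if_neg d2]
        ring
      · simp only [DAx, DAy, DGx, DGy, if_neg c1, if_neg c2]
        ring
    · -- main term at i = k+1
      have c1 : ¬(k - 1 = k + 1) := fun h => hn2 (by linear_combination -h)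
      have c2 : ¬(k = k + 1) := fun h => hn1 (by linear_combination -h)
      have c3 : (k + 1 : ZMod N) = k + 1 := rfl
      have c4 : ¬(k + 1 + 1 = k + 1) := fun h => hn1 (by linear_combination h)
      have e1 : (k - 1 + 1 : ZMod N) = k := by ring
      have h0 : Gv N (k-1) p ≠ 0 := hg _
      have h1 : Gv N k p ≠ 0 := hg _
      have h2 : Gv N (k+1) p ≠ 0 := hg _
      simp only [DBx, DBy, DAx, DAy, DUx, DUy, DGx, DGy, e1, if_neg c1, if_neg c2,
        if_pos c3, if_neg c4, Av, ↓reduceIte]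
      simp only [Gv, Uv, e1] at h0 h1 h2 ⊢
      field_simp
      ring
  · intro j hj2 hj1 hj0 hjp1
    rw [hpb j]
    rw [Finset.sum_eq_zero ?_, mul_zero]
    intro i _
    by_cases c0 : j = i
    · have d1 : ¬(k - 1 = i) := by rw [← c0]; exact fun h => hj1 h.symm
      have d2 : ¬(k = i) := by rw [← c0]; exact fun h => hj0 h.symm
      have d3 : ¬(k + 1 = i) := by rw [← c0]; exact fun h => hjp1 h.symm
      have e1 : (k - 1 + 1 : ZMod N) = k := by ring
      simp only [DBx, DBy, DUx, DUy, DGx, DGy, e1, if_neg d1, if_neg d2, if_neg d3]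
      ring
    · by_cases c5 : j + 1 = i
      · have d1 : ¬(k - 1 = i) := by
          rw [← c5]; intro h; exact hj2 (by linear_combination -h)
        have d2 : ¬(k = i) := by
          rw [← c5]; intro h; exact hj1 (by linear_combination -h)
        have d3 : ¬(k + 1 = i) := by
          rw [← c5]; intro h; exact hj0 (by linear_combination -h)
        have e1 : (k - 1 + 1 : ZMod N) = k := by ring
        simp only [DBx, DBy, DUx, DUy, DGx, DGy, e1, if_neg d1, if_neg d2, if_neg d3]
        ring
      · simp only [DAx, DAy, DGx, DGy, if_neg c0, if_neg c5]
        ring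
end
end

section
/- The canonical Poisson bracket {g_k, g_{k+1}} of consecutive determinants equals -(1/2) u_{k+1}, and {g_k, g_j} = 0 whenever |k - j| ≥ 2 (mod N). -/
noncomputable section

open Function

/-!
Each `g_m` is linear in each coordinate, with `∂g_m/∂x_i`, `∂g_m/∂y_i` supported on
`i ∈ {m, m+1}`. The bracket sum therefore collapses onto the overlap of `{k, k+1}` and `{j, j+1}`:
the contributions of `k = j` cancel, and `j = k ± 1` leave `∓ u/2`. This gives
`{g_k, g_j} = ([k = j+1] u_k - [k+1 = j] u_j) / 2`.
-/

theorem hasDerivAt_update_apply {ι : Type*} [DecidableEq ι] (x : ι → ℝ) (i j : ι) (a : ℝ) :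
    HasDerivAt (fun t => update x i t j) (if j = i then 1 else 0) a := by
  by_cases h : j = i
  · subst h
    simpa using hasDerivAt_id' a
  · simpa [h] using hasDerivAt_const a (x j)

theorem deriv_Gv_update_fst (N : ℕ) (p : (ZMod N → ℝ) × (ZMod N → ℝ)) (m i : ZMod N)
    (a : ℝ) :
    deriv (fun t => Gv N m (update p.1 i t, p.2)) a =
      (if m = i then p.2 (m + 1) else 0) - (if m + 1 = i then p.2 m else 0) := by
  have h : HasDerivAt (fun t => Gv N m (update p.1 i t, p.2)) _ a :=
    ((hasDerivAt_update_apply p.1 i m a).mul_const (p.2 (m + 1))).sub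
      ((hasDerivAt_update_apply p.1 i (m + 1) a).const_mul (p.2 m))
  rw [h.deriv]
  split_ifs <;> ring

theorem deriv_Gv_update_snd (N : ℕ) (p : (ZMod N → ℝ) × (ZMod N → ℝ)) (m i : ZMod N)
    (a : ℝ) :
    deriv (fun t => Gv N m (p.1, update p.2 i t)) a =
      (if m + 1 = i then p.1 m else 0) - (if m = i then p.1 (m + 1) else 0) := by
  have h : HasDerivAt (fun t => Gv N m (p.1, update p.2 i t)) _ a :=
    ((hasDerivAt_update_apply p.2 i (m + 1) a).const_mul (p.1 m)).sub
      ((hasDerivAt_update_apply p.2 i m a).mul_const (p.1 (m + 1)))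
  rw [h.deriv]
  split_ifs <;> ring

theorem Uv_eq_of_eq_add_one (N : ℕ) (p : (ZMod N → ℝ) × (ZMod N → ℝ)) {k j : ZMod N}
    (h : k = j + 1) : Uv N k p = p.1 j * p.2 (k + 1) - p.2 j * p.1 (k + 1) := by
  subst h
  rw [Uv, add_sub_cancel_right]

theorem pb_Gv_Gv (N : ℕ) [NeZero N] (p : (ZMod N → ℝ) × (ZMod N → ℝ)) (k j : ZMod N) :
    pb N (Gv N k) (Gv N j) p =
      (1 / 2) * ((if k = j + 1 then Uv N k p else 0) - (if k + 1 = j then Uv N j p else 0)) := by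
  have expand : pb N (Gv N k) (Gv N j) p = (1 / 2) *
      ((if k = j + 1 then p.1 j * p.2 (k + 1) - p.2 j * p.1 (k + 1) else 0) -
        (if k + 1 = j then p.1 k * p.2 (j + 1) - p.2 k * p.1 (j + 1) else 0)) := by
    simp only [pb, deriv_Gv_update_fst, deriv_Gv_update_snd, sub_mul, mul_sub, ite_mul, mul_ite,
      zero_mul, mul_zero, Finset.sum_sub_distrib, Finset.sum_ite_eq, Finset.mem_univ, if_true,
      add_left_inj]
    -- the terms supported on `k = j` cancel in pairs
    by_cases hkj : k = j
    · subst hkj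
      simp only [if_true]
      split_ifs <;> ring
    · simp only [hkj, if_false]
      split_ifs <;> ring
  rw [expand]
  congr 2
  · exact ite_congr rfl (fun h => (Uv_eq_of_eq_add_one N p h).symm) fun _ => rfl
  · exact ite_congr rfl (fun h => (Uv_eq_of_eq_add_one N p h.symm).symm) fun _ => rfl

theorem stmt12_general (N : ℕ) [NeZero N]
    (p : (ZMod N → ℝ) × (ZMod N → ℝ)) (k : ZMod N) :
    pb N (Gv N k) (Gv N (k + 1)) p = -(1 / 2) * Uv N (k + 1) p ∧
    ∀ j : ZMod N, j ≠ k - 1 → j ≠ k → j ≠ k + 1 →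
      pb N (Gv N k) (Gv N j) p = 0 := by
  refine ⟨?_, fun j hj₁ _ hj₃ => ?_⟩
  · -- `k = k + 2` happens only for `N ≤ 2`, where `u_k = x_{k+1} y_{k+1} - y_{k+1} x_{k+1}`.
    have hUv : (if k = k + 1 + 1 then Uv N k p else 0) = 0 := by
      split_ifs with h
      · rw [Uv_eq_of_eq_add_one N p h]
        ring
      · rfl
    rw [pb_Gv_Gv, hUv, if_pos rfl]
    ring
  · rw [pb_Gv_Gv, if_neg (fun h => hj₁ (eq_sub_of_add_eq h.symm)), if_neg (Ne.symm hj₃)]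
    ring

theorem stmt12 (N : ℕ) [NeZero N] (hN : 3 < N)
    (p : (ZMod N → ℝ) × (ZMod N → ℝ)) (k : ZMod N) :
    pb N (Gv N k) (Gv N (k + 1)) p = -(1 / 2) * Uv N (k + 1) p ∧
    ∀ j : ZMod N, j ≠ k - 1 → j ≠ k → j ≠ k + 1 →
      pb N (Gv N k) (Gv N j) p = 0 :=
  stmt12_general N p k
end
end
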